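/- Let q be a complex number with |q| < 1 and let u be any complex number. Then ∑_{i,j ≥ 0} u^{i+j} q^{i²+j²−i} / ( (q²;q²)_i (q²;q²)_j ) = (−u;q)_∞. Moreover, for every integer n ≥ 0, ∑_{i,j ≥ 0, i+j=n} q^{i²+j²−i} / ( (q²;q²)_i (q²;q²)_j ) = q^{n(n−1)/2} / (q;q)_n. (Paper's Lemma 2.3.) -/

import Mathlib

open Finset Filter Topology

/-- Finite q-Pochhammer symbol `(a;q)_n`. -/
noncomputable def qp (a q : ℂ) (n : ℕ) : ℂ := ∏ m ∈ Finset.range n, (1 - a * q ^ m)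

/-- Infinite q-Pochhammer symbol `(a;q)_∞`. -/
noncomputable def qpInf (a q : ℂ) : ℂ := ∏' m : ℕ, (1 - a * q ^ m)

lemma qp_succ (a q : ℂ) (n : ℕ) : qp a q (n + 1) = qp a q n * (1 - a * q ^ n) :=
  Finset.prod_range_succ _ _
lemma qp_add (a q : ℂ) (m k : ℕ) :
    qp a q (m + k) = qp a q m * ∏ j ∈ range k, (1 - a * q ^ (m + j)) :=
  Finset.prod_range_add _ _ _

lemma tri_succ (k : ℕ) : (k + 1) * k / 2 = k * (k - 1) / 2 + k := by
  have h1 : (k + 1) * k / 2 = (k + 1).choose 2 := by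
    rw [Nat.choose_two_right]; simp
  have h2 : k * (k - 1) / 2 = k.choose 2 := (Nat.choose_two_right k).symm
  rw [h1, h2, show k + 1 = k.succ from rfl, Nat.choose_succ_succ]
  simp [Nat.choose_one_right, Nat.add_comm]

lemma sq_sub_self (k : ℕ) : k ^ 2 - k = 2 * (k * (k - 1) / 2) := by
  have h : k ^ 2 - k = k * (k - 1) := by
    cases k with
    | zero => rfl
    | succ m => simp [pow_two, Nat.succ_sub_one, Nat.mul_succ, Nat.add_sub_cancel, Nat.mul_comm]
  rw [h, Nat.mul_div_cancel' (Nat.even_mul_pred_self k).two_dvd]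

lemma le_sq (k : ℕ) : k ≤ k ^ 2 := by nlinarith

lemma exp_le_one_sub {x a : ℝ} (hx : 0 ≤ x) (hxa : x ≤ a) (ha : a < 1) :
    Real.exp (-(x / (1 - a))) ≤ 1 - x := by
  have ha0 : 0 < 1 - a := by linarith
  have ht : 0 ≤ x / (1 - a) := div_nonneg hx ha0.le
  have hprod : Real.exp (-(x / (1 - a))) * Real.exp (x / (1 - a)) = 1 := by
    rw [← Real.exp_add]; simp
  have he := Real.add_one_le_exp (x / (1 - a))
  have hp := Real.exp_pos (-(x / (1 - a)))
  have hkey : (1 - x) * (1 + x / (1 - a)) ≥ 1 := by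
    rw [ge_iff_le, ← sub_nonneg]
    have : (1 - x) * (1 + x / (1 - a)) - 1 = x * (a - x) / (1 - a) := by
      field_simp; ring
    rw [this]
    exact div_nonneg (mul_nonneg hx (by linarith)) ha0.le
  nlinarith [hprod, he, hp]

lemma geom_tail {r : ℝ} (h0 : 0 ≤ r) (h1 : r < 1) (n : ℕ) :
    ∑ m ∈ range n, r ^ (m + 1) ≤ r / (1 - r) := by
  have hsum : ∑ m ∈ range n, r ^ (m + 1) = r * ∑ m ∈ range n, r ^ m := by
    rw [mul_sum]; exact Finset.sum_congr rfl fun m _ => by ring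
  rw [hsum, div_eq_mul_inv]
  refine mul_le_mul_of_nonneg_left ?_ h0
  have := Summable.sum_le_tsum (range n) (fun i _ => pow_nonneg h0 i)
    (summable_geometric_of_lt_one h0 h1)
  rwa [tsum_geometric_of_lt_one h0 h1] at this

variable {Q : ℂ}

lemma one_sub_ne (hQ : ‖Q‖ < 1) (m : ℕ) : 1 - Q * Q ^ m ≠ 0 := by
  intro h
  have h2 : Q * Q ^ m = 1 := by linear_combination -h
  have hlt : ‖Q * Q ^ m‖ < 1 := by
    rw [norm_mul, norm_pow]
    have h3 : ‖Q‖ ^ m ≤ 1 := pow_le_one₀ (norm_nonneg _) hQ.le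
    nlinarith [norm_nonneg Q, pow_nonneg (norm_nonneg Q) m]
  rw [h2, norm_one] at hlt; exact lt_irrefl _ hlt

lemma qp_ne_zero (hQ : ‖Q‖ < 1) (n : ℕ) : qp Q Q n ≠ 0 :=
  Finset.prod_ne_zero_iff.2 fun m _ => one_sub_ne hQ m

lemma norm_qp_ge (hQ : ‖Q‖ < 1) (n : ℕ) :
    Real.exp (-(‖Q‖ / (1 - ‖Q‖) ^ 2)) ≤ ‖qp Q Q n‖ := by
  have h0 : (0:ℝ) ≤ ‖Q‖ := norm_nonneg _
  have h1 : (0:ℝ) < 1 - ‖Q‖ := by linarith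
  calc Real.exp (-(‖Q‖ / (1 - ‖Q‖) ^ 2))
      ≤ Real.exp (-((∑ m ∈ range n, ‖Q‖ ^ (m + 1)) / (1 - ‖Q‖))) := by
        apply Real.exp_le_exp.2
        apply neg_le_neg
        rw [div_le_div_iff₀ h1 (by positivity), pow_two]
        calc (∑ m ∈ range n, ‖Q‖ ^ (m + 1)) * ((1 - ‖Q‖) * (1 - ‖Q‖))
            ≤ (‖Q‖ / (1 - ‖Q‖)) * ((1 - ‖Q‖) * (1 - ‖Q‖)) := by
              apply mul_le_mul_of_nonneg_right (geom_tail h0 hQ n) (by positivity)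
          _ = ‖Q‖ * (1 - ‖Q‖) := by
              rw [← mul_assoc, div_mul_cancel₀ _ h1.ne']
    _ = ∏ m ∈ range n, Real.exp (-(‖Q‖ ^ (m + 1) / (1 - ‖Q‖))) := by
        rw [← Real.exp_sum]
        congr 1
        rw [Finset.sum_neg_distrib, ← Finset.sum_div]
    _ ≤ ∏ m ∈ range n, (1 - ‖Q‖ ^ (m + 1)) := by
        apply Finset.prod_le_prod (fun m _ => (Real.exp_pos _).le)
        intro m _
        exact exp_le_one_sub (by positivity) (pow_le_of_le_one h0 hQ.le (Nat.succ_ne_zero m)) hQ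
    _ ≤ ∏ m ∈ range n, ‖1 - Q * Q ^ m‖ := by
        apply Finset.prod_le_prod
        · intro m _
          have := pow_le_one₀ h0 hQ.le (n := m + 1); linarith
        · intro m _
          have h2 : ‖(1:ℂ)‖ - ‖Q * Q ^ m‖ ≤ ‖1 - Q * Q ^ m‖ := norm_sub_norm_le _ _
          rw [norm_one] at h2
          have h3 : ‖Q * Q ^ m‖ = ‖Q‖ ^ (m + 1) := by rw [norm_mul, norm_pow, pow_succ]; ring
          linarith
    _ = ‖qp Q Q n‖ := by rw [qp, norm_prod]

lemma norm_qp_div_le (hQ : ‖Q‖ < 1) (M k : ℕ) :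
    ‖qp Q Q (M + k) / qp Q Q M‖ ≤ Real.exp (‖Q‖ / (1 - ‖Q‖)) := by
  have h0 : (0:ℝ) ≤ ‖Q‖ := norm_nonneg _
  have h1 : (0:ℝ) < 1 - ‖Q‖ := by linarith
  have hM : qp Q Q M ≠ 0 := qp_ne_zero hQ M
  rw [qp_add, mul_comm, mul_div_assoc, div_self hM, mul_one, norm_prod]
  calc ∏ j ∈ range k, ‖1 - Q * Q ^ (M + j)‖
      ≤ ∏ j ∈ range k, (1 + ‖Q‖ ^ (M + j + 1)) := by
        apply Finset.prod_le_prod (fun _ _ => norm_nonneg _)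
        intro j _
        calc ‖1 - Q * Q ^ (M + j)‖ ≤ ‖(1:ℂ)‖ + ‖Q * Q ^ (M + j)‖ := norm_sub_le _ _
          _ = 1 + ‖Q‖ ^ (M + j + 1) := by
              rw [norm_one, norm_mul, norm_pow, pow_succ]; ring_nf
    _ ≤ ∏ j ∈ range k, Real.exp (‖Q‖ ^ (M + j + 1)) := by
        apply Finset.prod_le_prod (fun j _ => by positivity)
        intro j _
        have := Real.add_one_le_exp (‖Q‖ ^ (M + j + 1))
        linarith
    _ = Real.exp (∑ j ∈ range k, ‖Q‖ ^ (M + j + 1)) := (Real.exp_sum _ _).symm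
    _ ≤ Real.exp (‖Q‖ / (1 - ‖Q‖)) := by
        apply Real.exp_le_exp.2
        calc ∑ j ∈ range k, ‖Q‖ ^ (M + j + 1) ≤ ∑ j ∈ range k, ‖Q‖ ^ (j + 1) := by
              apply Finset.sum_le_sum
              intro j _
              exact pow_le_pow_of_le_one h0 hQ.le (by omega)
          _ ≤ ‖Q‖ / (1 - ‖Q‖) := geom_tail h0 hQ k

/-- q-binomial coefficient (as a ratio), extended by 0 for k > N. -/
noncomputable def rr (Q : ℂ) (N k : ℕ) : ℂ :=
  if k ≤ N then qp Q Q N / (qp Q Q k * qp Q Q (N - k)) else 0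

lemma rr_zero (hQ : ‖Q‖ < 1) (N : ℕ) : rr Q N 0 = 1 := by
  simp only [rr, Nat.zero_le, if_true, Nat.sub_zero]
  rw [show qp Q Q 0 = 1 by simp [qp], one_mul, div_self (qp_ne_zero hQ N)]

lemma norm_rr_le (hQ : ‖Q‖ < 1) (N k : ℕ) :
    ‖rr Q N k‖ ≤ Real.exp (‖Q‖ / (1 - ‖Q‖)) / Real.exp (-(‖Q‖ / (1 - ‖Q‖) ^ 2)) := by
  rw [rr]
  split
  · next h =>
    have hk : N - k + k = N := Nat.sub_add_cancel h
    have : qp Q Q N / (qp Q Q k * qp Q Q (N - k))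
        = (qp Q Q ((N - k) + k) / qp Q Q (N - k)) * (qp Q Q k)⁻¹ := by
      rw [hk, mul_comm, ← div_div, div_eq_mul_inv (qp Q Q N / qp Q Q (N - k))]
    rw [this, norm_mul, norm_inv, div_eq_mul_inv]
    have h2 : ‖qp Q Q k‖⁻¹ ≤ (Real.exp (-(‖Q‖ / (1 - ‖Q‖) ^ 2)))⁻¹ :=
      inv_anti₀ (Real.exp_pos _) (norm_qp_ge hQ k)
    apply mul_le_mul (norm_qp_div_le hQ _ _) h2 (by positivity) (by positivity)
  · rw [norm_zero]
    positivity

lemma rr_pascal (hQ : ‖Q‖ < 1) (N k : ℕ) (hk : k ≤ N) :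
    rr Q (N + 1) (k + 1) = Q ^ (k + 1) * rr Q N (k + 1) + rr Q N k := by
  rcases Nat.lt_or_ge k N with hlt | hge
  · -- k + 1 ≤ N
    have h1 : k + 1 ≤ N := hlt
    set j := N - (k + 1) with hj
    have hNk : N - k = j + 1 := by omega
    have hN1k : N + 1 - (k + 1) = j + 1 := by omega
    have hQN : Q ^ N = Q ^ k * Q ^ j * Q := by
      rw [show N = k + (j + 1) by omega, pow_add, pow_succ]
      ring
    simp only [rr, if_pos (by omega : k + 1 ≤ N + 1), if_pos h1, if_pos hk, hNk, hN1k, ← hj]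
    rw [qp_succ Q Q N, qp_succ Q Q k, qp_succ Q Q j]
    have hA := qp_ne_zero hQ N
    have hB := qp_ne_zero hQ k
    have hC := qp_ne_zero hQ j
    have hx := one_sub_ne hQ k
    have hy := one_sub_ne hQ j
    field_simp
    rw [hQN]
    ring
  · -- k = N
    have hkN : k = N := le_antisymm hk hge
    subst hkN
    have h1 : rr Q (k + 1) (k + 1) = 1 := by
      simp only [rr, le_refl, if_true, Nat.sub_self]
      rw [show qp Q Q 0 = 1 by simp [qp], mul_one, div_self (qp_ne_zero hQ (k + 1))]
    have h2 : rr Q k (k + 1) = 0 := by simp [rr]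
    have h3 : rr Q k k = 1 := by
      simp only [rr, le_refl, if_true, Nat.sub_self]
      rw [show qp Q Q 0 = 1 by simp [qp], mul_one, div_self (qp_ne_zero hQ k)]
    rw [h1, h2, h3, mul_zero, zero_add]

lemma qbinom (hQ : ‖Q‖ < 1) :
    ∀ N : ℕ, ∀ v : ℂ, ∏ m ∈ range N, (1 + v * Q ^ m)
      = ∑ k ∈ range (N + 1), rr Q N k * Q ^ (k * (k - 1) / 2) * v ^ k := by
  intro N
  induction N with
  | zero =>
    intro v
    simp [rr_zero hQ]
  | succ N IH =>
    intro v
    set g : ℕ → ℂ := fun k => rr Q N k * Q ^ (k * (k - 1) / 2 + k) * v ^ k with hg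
    have hgN1 : g (N + 1) = 0 := by simp [hg, rr]
    have hg0 : g 0 = 1 := by simp [hg, rr_zero hQ]
    have hLHS : ∏ m ∈ range (N + 1), (1 + v * Q ^ m)
        = ∑ k ∈ range (N + 1), (g k + g k * v) := by
      rw [Finset.prod_range_succ']
      have : ∀ i, 1 + v * Q ^ (i + 1) = 1 + (v * Q) * Q ^ i := by
        intro i; rw [pow_succ]; ring
      rw [Finset.prod_congr rfl fun i _ => this i, IH (v * Q)]
      rw [Finset.sum_mul]
      apply Finset.sum_congr rfl
      intro k _
      simp only [hg]
      rw [mul_pow, pow_add]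
      ring
    rw [hLHS]
    -- RHS
    rw [Finset.sum_range_succ' (fun k => rr Q (N + 1) k * Q ^ (k * (k - 1) / 2) * v ^ k) (N + 1)]
    have hterm : ∀ k ∈ range (N + 1),
        rr Q (N + 1) (k + 1) * Q ^ ((k + 1) * k / 2) * v ^ (k + 1)
          = g (k + 1) + g k * v := by
      intro k hk
      rw [Finset.mem_range] at hk
      have hkN : k ≤ N := by omega
      rw [rr_pascal hQ N k hkN]
      simp only [hg]
      have e1 : (k + 1) * ((k + 1) - 1) / 2 + (k + 1) = (k + 1) * k / 2 + (k + 1) := by simp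
      have e2 : (k + 1) * k / 2 = k * (k - 1) / 2 + k := tri_succ k
      rw [e1, e2]
      rw [pow_add, pow_add, pow_add, pow_succ]
      ring
    have hsum1 : ∑ k ∈ range (N + 1),
        rr Q (N + 1) (k + 1) * Q ^ ((k + 1) * ((k + 1) - 1) / 2) * v ^ (k + 1)
          = ∑ k ∈ range (N + 1), (g (k + 1) + g k * v) := by
      apply Finset.sum_congr rfl
      intro k hk
      have : (k + 1) * ((k + 1) - 1) / 2 = (k + 1) * k / 2 := by simp
      rw [this]
      exact hterm k hk
    rw [hsum1]
    have hshift : ∑ k ∈ range (N + 1), g (k + 1) = ∑ k ∈ range (N + 1), g k - g 0 := by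
      have h1 := Finset.sum_range_succ' g (N + 1)
      have h2 := Finset.sum_range_succ g (N + 1)
      rw [hgN1, add_zero] at h2
      rw [← h2, h1]
      ring
    have hz : rr Q (N + 1) 0 * Q ^ (0 * (0 - 1) / 2) * v ^ 0 = 1 := by simp [rr_zero hQ]
    simp only [Finset.sum_add_distrib]
    rw [hshift, hg0, hz]
    ring

lemma rr_tendsto (hQ : ‖Q‖ < 1) (k : ℕ) :
    Tendsto (fun N => rr Q N k) atTop (𝓝 ((qp Q Q k)⁻¹)) := by
  rw [← Filter.tendsto_add_atTop_iff_nat k]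
  have heq : ∀ M : ℕ, rr Q (M + k) k = (∏ j ∈ range k, (1 - Q * Q ^ (M + j))) / qp Q Q k := by
    intro M
    rw [rr, if_pos (by omega : k ≤ M + k), Nat.add_sub_cancel, qp_add Q Q M k]
    rw [mul_comm (qp Q Q k) (qp Q Q M), mul_div_mul_left _ _ (qp_ne_zero hQ M)]
  have hlim : Tendsto (fun M => ∏ j ∈ range k, (1 - Q * Q ^ (M + j))) atTop (𝓝 1) := by
    have h1 : Tendsto (fun M => ∏ j ∈ range k, (1 - Q * Q ^ (M + j))) atTop
        (𝓝 (∏ _j ∈ range k, (1 : ℂ))) := by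
      apply tendsto_finset_prod
      intro j _
      have h2 : Tendsto (fun M : ℕ => Q ^ (M + j)) atTop (𝓝 0) := by
        have h3 := (tendsto_pow_atTop_nhds_zero_of_norm_lt_one hQ).mul_const (Q ^ j)
        rw [zero_mul] at h3
        refine h3.congr fun M => ?_
        rw [pow_add]
      have h4 := (h2.const_mul Q).const_sub 1
      simpa using h4
    simpa using h1
  have := hlim.div_const (qp Q Q k)
  rw [one_div] at this
  exact this.congr fun M => (heq M).symm

lemma tendsto_qbinom_prod (hQ : ‖Q‖ < 1) (v : ℂ) :
    Tendsto (fun N => ∏ m ∈ range N, (1 + v * Q ^ m)) atTop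
      (𝓝 (∑' k : ℕ, Q ^ (k * (k - 1) / 2) * v ^ k / qp Q Q k)) := by
  set CC : ℝ := Real.exp (‖Q‖ / (1 - ‖Q‖)) / Real.exp (-(‖Q‖ / (1 - ‖Q‖) ^ 2)) with hCC
  have hCC0 : 0 ≤ CC := by positivity
  set bound : ℕ → ℝ := fun k => CC * (‖Q‖ ^ (k * (k - 1) / 2) * ‖v‖ ^ k) with hbound
  have hbsum : Summable bound := by
    apply summable_of_ratio_norm_eventually_le (r := 1 / 2) (by norm_num)
    have h1 : Tendsto (fun k : ℕ => ‖Q‖ ^ k * ‖v‖) atTop (𝓝 0) := by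
      have := (tendsto_pow_atTop_nhds_zero_of_norm_lt_one
        (by rwa [Real.norm_eq_abs, abs_of_nonneg (norm_nonneg Q)] : ‖‖Q‖‖ < 1)).mul_const ‖v‖
      rwa [zero_mul] at this
    filter_upwards [h1.eventually_le_const (by norm_num : (0:ℝ) < 1/2),
      eventually_ge_atTop 0] with k hk _
    have he : bound (k + 1) = bound k * (‖Q‖ ^ k * ‖v‖) := by
      simp only [hbound]
      rw [show (k+1) * ((k+1) - 1) / 2 = k * (k - 1) / 2 + k by simpa using tri_succ k]
      rw [pow_add, pow_succ]
      ring
    rw [he, norm_mul, Real.norm_of_nonneg (by positivity : (0:ℝ) ≤ ‖Q‖ ^ k * ‖v‖)]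
    calc ‖bound k‖ * (‖Q‖ ^ k * ‖v‖) ≤ ‖bound k‖ * (1/2) :=
          mul_le_mul_of_nonneg_left hk (norm_nonneg _)
      _ = 1/2 * ‖bound k‖ := by ring
  have key : Tendsto (fun N => ∑' k : ℕ, rr Q N k * Q ^ (k * (k - 1) / 2) * v ^ k) atTop
      (𝓝 (∑' k : ℕ, Q ^ (k * (k - 1) / 2) * v ^ k / qp Q Q k)) := by
    apply tendsto_tsum_of_dominated_convergence hbsum
    · intro k
      have h1 := (rr_tendsto hQ k).mul_const (Q ^ (k * (k - 1) / 2) * v ^ k)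
      have h2 : (qp Q Q k)⁻¹ * (Q ^ (k * (k - 1) / 2) * v ^ k)
          = Q ^ (k * (k - 1) / 2) * v ^ k / qp Q Q k := by
        rw [div_eq_mul_inv]; ring
      rw [h2] at h1
      refine h1.congr fun N => by ring
    · filter_upwards [eventually_ge_atTop 0] with N _
      intro k
      rw [norm_mul, norm_mul, norm_pow, norm_pow, hbound]
      simp only []
      rw [← mul_assoc]
      apply mul_le_mul_of_nonneg_right ?_ (pow_nonneg (norm_nonneg v) k)
      exact mul_le_mul_of_nonneg_right (norm_rr_le hQ N k) (pow_nonneg (norm_nonneg Q) _)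
  refine key.congr fun N => ?_
  rw [tsum_eq_sum (s := range (N + 1)) (fun k hk => by
    rw [Finset.mem_range, not_lt] at hk
    have : rr Q N k = 0 := by rw [rr, if_neg (by omega)]
    rw [this, zero_mul, zero_mul])]
  exact (qbinom hQ N v).symm

lemma multipliable_one_add (hQ : ‖Q‖ < 1) (v : ℂ) :
    Multipliable (fun m : ℕ => 1 + v * Q ^ m) := by
  by_cases hz : ∀ m : ℕ, 1 + v * Q ^ m ≠ 0
  · have hlog : ∀ _x : Unit, Summable fun m : ℕ => Complex.log (1 + v * Q ^ m) := by
      intro _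
      apply Summable.of_norm_bounded_eventually_nat (g := fun m => 3/2 * (‖v‖ * ‖Q‖ ^ m))
      · exact ((summable_geometric_of_lt_one (norm_nonneg Q) hQ).mul_left ‖v‖).mul_left (3/2)
      · have h1 : Tendsto (fun m : ℕ => ‖v * Q ^ m‖) atTop (𝓝 0) := by
          have h2 := ((tendsto_pow_atTop_nhds_zero_of_norm_lt_one hQ).const_mul v).norm
          simpa using h2
        filter_upwards [h1.eventually_le_const (by norm_num : (0:ℝ) < 1/2)] with m hm
        have h3 := Complex.norm_log_one_add_half_le_self (z := v * Q ^ m) (by simpa using hm)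
        calc ‖Complex.log (1 + v * Q ^ m)‖ ≤ 3/2 * ‖v * Q ^ m‖ := h3
          _ = 3/2 * (‖v‖ * ‖Q‖ ^ m) := by rw [norm_mul, norm_pow]
    exact Complex.multipliable_of_summable_log (hlog ())
  · push_neg at hz
    obtain ⟨m₀, hm₀⟩ := hz
    refine ⟨0, ?_⟩
    rw [HasProd]
    have hev : ∀ᶠ s : Finset ℕ in atTop, (0:ℂ) = ∏ i ∈ s, (1 + v * Q ^ i) := by
      filter_upwards [eventually_ge_atTop ({m₀} : Finset ℕ)] with s hs
      exact (Finset.prod_eq_zero (hs (Finset.mem_singleton_self m₀)) hm₀).symm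
    exact Tendsto.congr' hev tendsto_const_nhds

lemma euler (hQ : ‖Q‖ < 1) (v : ℂ) :
    ∑' k : ℕ, Q ^ (k * (k - 1) / 2) * v ^ k / qp Q Q k = ∏' m : ℕ, (1 + v * Q ^ m) :=
  tendsto_nhds_unique (tendsto_qbinom_prod hQ v)
    (multipliable_one_add hQ v).hasProd.tendsto_prod_nat

lemma euler_summable_norm (hQ : ‖Q‖ < 1) (v : ℂ) :
    Summable (fun k : ℕ => ‖Q ^ (k * (k - 1) / 2) * v ^ k / qp Q Q k‖) := by
  apply summable_of_ratio_norm_eventually_le (r := 1 / 2) (by norm_num)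
  have h1 : Tendsto (fun k : ℕ => ‖Q‖ ^ k * ‖v‖ / (1 - ‖Q‖)) atTop (𝓝 0) := by
    have h2 := ((tendsto_pow_atTop_nhds_zero_of_norm_lt_one
      (by rwa [Real.norm_eq_abs, abs_of_nonneg (norm_nonneg Q)] : ‖‖Q‖‖ < 1)).mul_const
        ‖v‖).div_const (1 - ‖Q‖)
    simpa using h2
  filter_upwards [h1.eventually_le_const (by norm_num : (0:ℝ) < 1/2)] with k hk
  have hq1 : (0:ℝ) < 1 - ‖Q‖ := by linarith
  set t : ℕ → ℂ := fun k => Q ^ (k * (k - 1) / 2) * v ^ k / qp Q Q k with ht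
  have hrec : t (k + 1) * (1 - Q * Q ^ k) = t k * (Q ^ k * v) := by
    simp only [ht]
    rw [show (k+1) * ((k+1) - 1) / 2 = k * (k - 1) / 2 + k by simpa using tri_succ k]
    rw [qp_succ, pow_add, pow_succ]
    field_simp [qp_ne_zero hQ k, qp_ne_zero hQ (k+1), one_sub_ne hQ k]
    have hinv := mul_inv_cancel₀ (one_sub_ne hQ k)
    linear_combination (Q ^ k * Q ^ (k * (k - 1) / 2) * v * v ^ k) * hinv
  have hnz := one_sub_ne hQ k
  have hnorm1 : ‖(1 : ℂ) - Q * Q ^ k‖ ≥ 1 - ‖Q‖ := by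
    have h2 : ‖(1:ℂ)‖ - ‖Q * Q ^ k‖ ≤ ‖1 - Q * Q ^ k‖ := norm_sub_norm_le _ _
    rw [norm_one, norm_mul, norm_pow] at h2
    have h3 : ‖Q‖ * ‖Q‖ ^ k ≤ ‖Q‖ := by
      have := pow_le_one₀ (norm_nonneg Q) hQ.le (n := k)
      nlinarith [norm_nonneg Q]
    linarith
  have hn : (0:ℝ) < ‖(1:ℂ) - Q * Q ^ k‖ := norm_pos_iff.2 hnz
  have hmul : ‖t (k + 1)‖ * ‖(1:ℂ) - Q * Q ^ k‖ = ‖t k‖ * (‖Q‖ ^ k * ‖v‖) := by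
    have h5 := congrArg norm hrec
    rw [norm_mul, norm_mul, norm_mul, norm_pow] at h5
    linarith [h5]
  have heq : ‖t (k + 1)‖ = ‖t k‖ * (‖Q‖ ^ k * ‖v‖) / ‖(1:ℂ) - Q * Q ^ k‖ := by
    rw [eq_div_iff hn.ne']
    exact hmul
  rw [Real.norm_of_nonneg (norm_nonneg _), Real.norm_of_nonneg (norm_nonneg _), heq]
  calc ‖t k‖ * (‖Q‖ ^ k * ‖v‖) / ‖(1:ℂ) - Q * Q ^ k‖
      ≤ ‖t k‖ * (‖Q‖ ^ k * ‖v‖) / (1 - ‖Q‖) :=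
        div_le_div_of_nonneg_left (by positivity) hq1 hnorm1
    _ = ‖t k‖ * (‖Q‖ ^ k * ‖v‖ / (1 - ‖Q‖)) := by ring
    _ ≤ ‖t k‖ * (1/2) := mul_le_mul_of_nonneg_left hk (norm_nonneg _)
    _ = 1/2 * ‖t k‖ := by ring

lemma one_add_ne (hQ : ‖Q‖ < 1) (m : ℕ) : 1 + Q * Q ^ m ≠ 0 := by
  intro h
  have h2 : Q * Q ^ m = -1 := by linear_combination h
  have hlt : ‖Q * Q ^ m‖ < 1 := by
    rw [norm_mul, norm_pow]
    have h3 : ‖Q‖ ^ m ≤ 1 := pow_le_one₀ (norm_nonneg _) hQ.le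
    nlinarith [norm_nonneg Q, pow_nonneg (norm_nonneg Q) m]
  rw [h2] at hlt; simp at hlt

lemma E1 (k j : ℕ) : (k+1)^2 + j^2 - (k+1) = (j^2 + k^2 - j) + (k + j) := by
  have h1 : k + 1 ≤ (k+1)^2 + j^2 := le_trans (le_sq _) (Nat.le_add_right _ _)
  have h2 : j ≤ j^2 + k^2 := le_trans (le_sq _) (Nat.le_add_right _ _)
  zify [h1, h2]
  ring

lemma E2 (k j : ℕ) : (k^2 + (j+1)^2 - k) + 2*k = (k^2 + j^2 - k) + (2*(k+j)+1) := by
  have h1 : k ≤ k^2 + (j+1)^2 := le_trans (le_sq _) (Nat.le_add_right _ _)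
  have h2 : k ≤ k^2 + j^2 := le_trans (le_sq _) (Nat.le_add_right _ _)
  zify [h1, h2]
  ring

lemma part2 {q : ℂ} (hq : ‖q‖ < 1) (n : ℕ) :
    ∑ k ∈ range (n + 1),
        q ^ (k ^ 2 + (n - k) ^ 2 - k) / (qp (q^2) (q^2) k * qp (q^2) (q^2) (n - k))
      = q ^ (n * (n - 1) / 2) / qp q q n := by
  have hQ2 : ‖q^2‖ < 1 := by
    rw [norm_pow]
    nlinarith [norm_nonneg q]
  induction n with
  | zero => simp [qp]
  | succ n IH =>
    set Q : ℂ := q^2 with hQdef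
    set t : ℕ → ℂ := fun k =>
      q ^ (k ^ 2 + (n + 1 - k) ^ 2 - k) / (qp Q Q k * qp Q Q (n + 1 - k)) with ht
    set s : ℕ → ℂ := fun k =>
      q ^ (k ^ 2 + (n - k) ^ 2 - k) / (qp Q Q k * qp Q Q (n - k)) with hs
    have key : (1 - Q^(n+1)) * (∑ k ∈ range (n+2), t k)
        = (q^n + q^(2*n+1)) * ∑ k ∈ range (n+1), s k := by
      rw [Finset.mul_sum]
      have hsplit : ∀ k ∈ range (n+2),
          (1 - Q^(n+1)) * t k
            = (1 - Q^k) * t k + (Q^k * (1 - Q^(n+1-k))) * t k := by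
        intro k hk
        rw [Finset.mem_range] at hk
        have hID : (1:ℂ) - Q^(n+1) = (1 - Q^k) + Q^k * (1 - Q^(n+1-k)) := by
          have : Q^k * Q^(n+1-k) = Q^(n+1) := by
            rw [← pow_add]
            congr 1
            omega
          linear_combination this
        rw [hID, add_mul]
      rw [Finset.sum_congr rfl hsplit, Finset.sum_add_distrib]
      have hA : ∑ k ∈ range (n+2), (1 - Q^k) * t k = q^n * ∑ k ∈ range (n+1), s k := by
        rw [Finset.sum_range_succ' (fun k => (1 - Q^k) * t k) (n+1)]
        have h0 : (1 - Q^0) * t 0 = 0 := by simp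
        rw [h0, add_zero]
        have hcong : ∀ k ∈ range (n+1), (1 - Q^(k+1)) * t (k+1) = q^n * s (n-k) := by
          intro k hk
          rw [Finset.mem_range] at hk
          have hkn : k ≤ n := by omega
          have hidx : n + 1 - (k+1) = n - k := by omega
          have hidx2 : n - (n - k) = k := by omega
          have hE := E1 k (n-k)
          rw [show k + (n-k) = n by omega] at hE
          simp only [ht, hs, hidx, hidx2]
          rw [hE, pow_add, qp_succ Q Q k, show Q * Q ^ k = Q^(k+1) by rw [pow_succ]; ring]
          have d1 := qp_ne_zero hQ2 k
          have d2 := qp_ne_zero hQ2 (n-k)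
          have d3 : (1:ℂ) - Q^(k+1) ≠ 0 := by
            have := one_sub_ne hQ2 k
            rwa [show Q * Q ^ k = Q^(k+1) by rw [pow_succ]; ring] at this
          field_simp
          ring
        rw [Finset.sum_congr rfl hcong, ← Finset.mul_sum]
        congr 1
        have hrefl := Finset.sum_range_reflect s (n+1)
        simp only [Nat.add_sub_cancel] at hrefl
        rw [← hrefl]
      have hB : ∑ k ∈ range (n+2), (Q^k * (1 - Q^(n+1-k))) * t k
          = q^(2*n+1) * ∑ k ∈ range (n+1), s k := by
        rw [Finset.sum_range_succ]
        have h0 : (Q^(n+1) * (1 - Q^(n+1-(n+1)))) * t (n+1) = 0 := by simp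
        rw [h0, add_zero, Finset.mul_sum]
        apply Finset.sum_congr rfl
        intro k hk
        rw [Finset.mem_range] at hk
        have hkn : k ≤ n := by omega
        have hidx : n + 1 - k = (n - k) + 1 := by omega
        have hE := E2 k (n-k)
        rw [show 2*(k+(n-k))+1 = 2*n+1 by omega] at hE
        simp only [ht, hs, hidx]
        rw [qp_succ Q Q (n-k), show Q * Q ^ (n-k) = Q^((n-k)+1) by rw [pow_succ]; ring]
        have d1 := qp_ne_zero hQ2 k
        have d2 := qp_ne_zero hQ2 (n-k)
        have d3 : (1:ℂ) - Q^((n-k)+1) ≠ 0 := by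
          have := one_sub_ne hQ2 (n-k)
          rwa [show Q * Q ^ (n-k) = Q^((n-k)+1) by rw [pow_succ]; ring] at this
        have hpow : (Q:ℂ)^k * q ^ (k ^ 2 + ((n-k)+1) ^ 2 - k)
            = q^(2*n+1) * q ^ (k ^ 2 + (n-k) ^ 2 - k) := by
          rw [hQdef, ← pow_mul, ← pow_add, ← pow_add]
          congr 1
          rw [Nat.add_comm (2*k), hE, Nat.add_comm]
        rw [← mul_assoc (qp Q Q k), ← div_div]
        rw [mul_assoc]
        have hcancel : (1 - Q^((n-k)+1)) *
            (q ^ (k ^ 2 + ((n-k)+1) ^ 2 - k) / (qp Q Q k * qp Q Q (n-k)) / (1 - Q^((n-k)+1)))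
            = q ^ (k ^ 2 + ((n-k)+1) ^ 2 - k) / (qp Q Q k * qp Q Q (n-k)) := by
          rw [mul_comm, div_mul_cancel₀ _ d3]
        rw [hcancel, ← mul_div_assoc, ← mul_div_assoc, hpow]
      rw [hA, hB]
      ring
    have hq1 : q * q ^ n = q ^ (n+1) := by rw [pow_succ]; ring
    have hne1 : (1:ℂ) - q^(n+1) ≠ 0 := by
      have := one_sub_ne hq n; rwa [hq1] at this
    have hne2 : (1:ℂ) + q^(n+1) ≠ 0 := by
      have := one_add_ne hq n; rwa [hq1] at this
    have hQn1 : (Q:ℂ)^(n+1) = q^(n+1) * q^(n+1) := by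
      rw [hQdef, ← pow_mul, ← pow_add]
      congr 1
      omega
    have hfac : (1:ℂ) - Q^(n+1) = (1 - q^(n+1)) * (1 + q^(n+1)) := by
      rw [hQn1]; ring
    have hne3 : (1:ℂ) - Q^(n+1) ≠ 0 := by
      rw [hfac]; exact mul_ne_zero hne1 hne2
    have h4 : ∑ k ∈ range (n+2), t k
        = (q^n + q^(2*n+1)) * (∑ k ∈ range (n+1), s k) / (1 - Q^(n+1)) := by
      rw [eq_div_iff hne3]
      linear_combination key
    have hgoal : ∑ k ∈ range (n+1+1), t k = q ^ ((n+1) * (n+1-1) / 2) / qp q q (n+1) := by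
      rw [show n+1+1 = n+2 from rfl, h4, IH]
      simp only [Nat.add_sub_cancel]
      have hp1 : q^(2*n+1) = q^n * q^(n+1) := by rw [← pow_add]; congr 1; omega
      have hp2 : (q:ℂ)^((n+1)*n/2) = q^(n*(n-1)/2) * q^n := by
        rw [← pow_add]; congr 1; exact tri_succ n
      rw [qp_succ q q n, hq1, hfac, hp1, hp2]
      have d4 := qp_ne_zero hq n
      field_simp
    exact hgoal


theorem stmt10 (q u : ℂ) (hq : ‖q‖ < 1) :
    (∑' p : ℕ × ℕ,
        u ^ (p.1 + p.2) * q ^ (p.1 ^ 2 + p.2 ^ 2 - p.1) /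
          (qp (q ^ 2) (q ^ 2) p.1 * qp (q ^ 2) (q ^ 2) p.2)
      = qpInf (-u) q) ∧
    ∀ n : ℕ,
      ∑ p ∈ (Finset.range (n + 1) ×ˢ Finset.range (n + 1)).filter
          (fun p => p.1 + p.2 = n),
        q ^ (p.1 ^ 2 + p.2 ^ 2 - p.1) / (qp (q ^ 2) (q ^ 2) p.1 * qp (q ^ 2) (q ^ 2) p.2)
      = q ^ (n * (n - 1) / 2) / qp q q n := by
  have hQ2 : ‖q ^ 2‖ < 1 := by
    rw [norm_pow]
    nlinarith [norm_nonneg q]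
  have hset : ∀ n : ℕ, (Finset.range (n + 1) ×ˢ Finset.range (n + 1)).filter
      (fun p => p.1 + p.2 = n) = Finset.HasAntidiagonal.antidiagonal n := by
    intro n
    ext p
    simp only [Finset.mem_filter, Finset.mem_product, Finset.mem_range,
      Finset.HasAntidiagonal.mem_antidiagonal]
    omega
  constructor
  · -- infinite identity
    set F : ℂ → ℕ → ℂ := fun v k => (q ^ 2) ^ (k * (k - 1) / 2) * v ^ k / qp (q ^ 2) (q ^ 2) k
      with hF
    have hsum1 : Summable fun k => ‖F u k‖ := euler_summable_norm hQ2 u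
    have hsum2 : Summable fun k => ‖F (u * q) k‖ := euler_summable_norm hQ2 (u * q)
    have hprod : ∀ p : ℕ × ℕ,
        u ^ (p.1 + p.2) * q ^ (p.1 ^ 2 + p.2 ^ 2 - p.1) /
            (qp (q ^ 2) (q ^ 2) p.1 * qp (q ^ 2) (q ^ 2) p.2)
          = F u p.1 * F (u * q) p.2 := by
      rintro ⟨i, j⟩
      simp only [hF]
      rw [show (q ^ 2) ^ (i * (i - 1) / 2) = q ^ (i ^ 2 - i) by rw [sq_sub_self i, pow_mul],
        show (q ^ 2) ^ (j * (j - 1) / 2) = q ^ (j ^ 2 - j) by rw [sq_sub_self j, pow_mul]]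
    -- exponents
      rw [show i ^ 2 + j ^ 2 - i = (i ^ 2 - i) + ((j ^ 2 - j) + j) by
        zify [le_sq i, le_sq j, le_trans (le_sq i) (Nat.le_add_right _ (j ^ 2))]; ring]
      rw [div_mul_div_comm]
      ring
    have hdiag : ∀ n : ℕ, ∑ kl ∈ Finset.HasAntidiagonal.antidiagonal n, F u kl.1 * F (u * q) kl.2
        = q ^ (n * (n - 1) / 2) * u ^ n / qp q q n := by
      intro n
      rw [Finset.Nat.sum_antidiagonal_eq_sum_range_succ_mk]
      have hterm : ∀ k ∈ range (n + 1), F u k * F (u * q) (n - k)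
          = u ^ n * (q ^ (k ^ 2 + (n - k) ^ 2 - k) /
              (qp (q ^ 2) (q ^ 2) k * qp (q ^ 2) (q ^ 2) (n - k))) := by
        intro k hk
        rw [Finset.mem_range] at hk
        rw [← hprod (k, n - k)]
        simp only []
        rw [show k + (n - k) = n by omega, mul_div_assoc]
      rw [Finset.sum_congr rfl hterm, ← Finset.mul_sum, part2 hq n]
      rw [mul_div_assoc]
      ring
    calc ∑' p : ℕ × ℕ,
          u ^ (p.1 + p.2) * q ^ (p.1 ^ 2 + p.2 ^ 2 - p.1) /
            (qp (q ^ 2) (q ^ 2) p.1 * qp (q ^ 2) (q ^ 2) p.2)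
        = ∑' p : ℕ × ℕ, F u p.1 * F (u * q) p.2 := tsum_congr hprod
      _ = (∑' k, F u k) * ∑' k, F (u * q) k :=
          (tsum_mul_tsum_of_summable_norm hsum1 hsum2).symm
      _ = ∑' n : ℕ, ∑ kl ∈ Finset.HasAntidiagonal.antidiagonal n, F u kl.1 * F (u * q) kl.2 :=
          tsum_mul_tsum_eq_tsum_sum_antidiagonal_of_summable_norm hsum1 hsum2
      _ = ∑' n : ℕ, q ^ (n * (n - 1) / 2) * u ^ n / qp q q n := tsum_congr hdiag
      _ = ∏' m : ℕ, (1 + u * q ^ m) := euler hq u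
      _ = qpInf (-u) q := by
          rw [qpInf]
          exact tprod_congr fun m => by ring
  · -- finite identity
    intro n
    rw [hset n, Finset.Nat.sum_antidiagonal_eq_sum_range_succ_mk]
    exact part2 hq n
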